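/- arXiv:2002.02684 — 3 statements merged into one kernel-verified Lean document; each statement's English description precedes it below -/
import Mathlib

section
/- Assume each Cₙ is Hermitian positive semidefinite and σ² > 0 (so that C_y is symmetric positive definite). Then the matrix Γ = Γ₀ − (1/4) Γ₀ Dᴴ C_y⁻¹ D Γ₀ is Hermitian positive semidefinite. (Proof idea: the Hermitian block matrix with blocks [[Γ₀, (1/2)Γ₀Dᴴ],[(1/2)DΓ₀, C_y]] is positive semidefinite, and Γ is its Schur complement with respect to the invertible block C_y.) -/
open Matrix
open scoped ComplexOrder

/-- Horizontal concatenation of the matrices `Ψ n`, `n = 1,…,N`. -/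
def concatD {N M : ℕ} (Ψ : Fin N → Matrix (Fin N) (Fin M) ℂ) :
    Matrix (Fin N) (Fin N × Fin M) ℂ :=
  Matrix.of fun k p => Ψ p.1 k p.2

/-- Block-diagonal matrix with `M×M` diagonal blocks `C 1,…,C N`. -/
def blockDiagC {N M : ℕ} (C : Fin N → Matrix (Fin M) (Fin M) ℂ) :
    Matrix (Fin N × Fin M) (Fin N × Fin M) ℂ :=
  Matrix.of fun p q => if p.1 = q.1 then C p.1 p.2 q.2 else 0

/-! With `E = D / 2`, the complexified `C_y` equals `E Γ₀ Eᴴ + S` where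
`S = σ² I + (D Γ₀ Dᴴ)ᵀ / 4` is positive definite: for the Hermitian matrix `X = D Γ₀ Dᴴ` one has
`Re X = (X + Xᵀ) / 2`. Hence `[[Γ₀, Γ₀ Eᴴ], [E Γ₀, E Γ₀ Eᴴ + S]]`, the sum of the congruences of
`Γ₀` by `[1; E]` and of `S` by `[0; 1]`, is positive semidefinite, and `Γ` is its Schur complement
with respect to the positive definite block `E Γ₀ Eᴴ + S`. -/

namespace Matrix

variable {m n o R : Type*}

theorem dotProduct_blockDiagonal_mulVec [NonUnitalSemiring R] [Star R] [Fintype m] [Fintype o]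
    [DecidableEq o] (M : o → Matrix m m R) (x : m × o → R) :
    star x ⬝ᵥ (blockDiagonal M *ᵥ x) =
      ∑ k, star (fun i => x (i, k)) ⬝ᵥ (M k *ᵥ fun i => x (i, k)) := by
  simp only [dotProduct, mulVec, blockDiagonal_apply, Fintype.sum_prod_type, Pi.star_apply,
    ite_mul, zero_mul, Finset.sum_ite_eq, Finset.mem_univ, if_true]
  rw [Finset.sum_comm]

theorem PosSemidef.blockDiagonal [Ring R] [PartialOrder R] [StarRing R] [AddLeftMono R]
    [Fintype m] [Fintype o] [DecidableEq o] {M : o → Matrix m m R}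
    (hM : ∀ k, (M k).PosSemidef) : (blockDiagonal M).PosSemidef := by
  refine posSemidef_iff_dotProduct_mulVec.mpr
    ⟨isHermitian_blockDiagonal_iff.mpr fun k => (hM k).1, fun x => ?_⟩
  rw [dotProduct_blockDiagonal_mulVec]
  exact Finset.sum_nonneg fun k _ => (hM k).dotProduct_mulVec_nonneg _

theorem map_nonsing_inv {K L : Type*} [Field K] [Field L] [Fintype n] [DecidableEq n]
    (f : K →+* L) (A : Matrix n n K) : A⁻¹.map f = (A.map f)⁻¹ := by
  by_cases hA : IsUnit A.det
  · refine (inv_eq_right_inv ?_).symm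
    rw [← Matrix.map_mul, mul_nonsing_inv A hA]
    exact Matrix.map_one _ (_root_.map_zero f) (_root_.map_one f)
  · have hAf : ¬IsUnit (A.map f).det := by
      rw [show (A.map f).det = f A.det from (f.map_det A).symm]
      simpa only [isUnit_iff_ne_zero, map_ne_zero] using hA
    rw [nonsing_inv_apply_not_isUnit A hA, nonsing_inv_apply_not_isUnit _ hAf,
      Matrix.map_zero _ (_root_.map_zero f)]

theorem IsHermitian.map_re_map_ofReal {A : Matrix n n ℂ} (hA : A.IsHermitian) :
    (A.map Complex.re).map Complex.ofReal = (1 / 2 : ℂ) • (A + Aᵀ) := by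
  ext i j
  have : Aᵀ i j = starRingEnd ℂ (A i j) := (hA.apply j i).symm
  simp only [map_apply, smul_apply, add_apply, this, Complex.re_eq_add_conj, smul_eq_mul]
  ring

theorem PosSemidef.sub_mul_conjTranspose_mul_inv_mul [Field R] [PartialOrder R] [StarRing R]
    [StarOrderedRing R] [Fintype m] [Fintype n] [DecidableEq m] [DecidableEq n] {G : Matrix m m R}
    (hG : G.PosSemidef) (E : Matrix n m R) {S : Matrix n n R} (hS : S.PosDef) :
    (G - G * Eᴴ * (E * G * Eᴴ + S)⁻¹ * E * G).PosSemidef := by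
  have hK : (E * G * Eᴴ + S).PosDef := PosDef.posSemidef_add (hG.mul_mul_conjTranspose_same E) hS
  have := hK.isUnit.invertible
  have hblocks : fromBlocks G (G * Eᴴ) (G * Eᴴ)ᴴ (E * G * Eᴴ + S) =
      fromRows 1 E * G * (fromRows 1 E)ᴴ +
        fromRows (0 : Matrix m n R) 1 * S * (fromRows (0 : Matrix m n R) 1)ᴴ := by
    simp only [conjTranspose_fromRows_eq_fromCols_conjTranspose, fromRows_mul]
    ext (i | i) (j | j) <;> simp [conjTranspose_mul, hG.1.eq]
  have := ((PosDef.fromBlocks₂₂ G (G * Eᴴ) hK).mp (hblocks ▸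
    (hG.mul_mul_conjTranspose_same _).add (hS.posSemidef.mul_mul_conjTranspose_same _)))
  simpa only [conjTranspose_mul, hG.1.eq, conjTranspose_conjTranspose, Matrix.mul_assoc] using this

end Matrix

theorem posSemidef_blockDiagC {N M : ℕ} {C : Fin N → Matrix (Fin M) (Fin M) ℂ}
    (hC : ∀ n, (C n).PosSemidef) : (blockDiagC C).PosSemidef := by
  have : blockDiagC C = (blockDiagonal C).submatrix (Equiv.prodComm _ _) (Equiv.prodComm _ _) := by
    ext ⟨k, i⟩ ⟨l, j⟩
    simp [blockDiagC, blockDiagonal_apply]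
  rw [this, posSemidef_submatrix_equiv]
  exact .blockDiagonal hC

/-- If each `Cₙ` is Hermitian positive semidefinite and `σ² > 0`, the posterior covariance
`Γ = Γ₀ − (1/4) Γ₀ Dᴴ C_y⁻¹ D Γ₀` is Hermitian positive semidefinite. -/
theorem stmt4 {N M : ℕ} (Ψ : Fin N → Matrix (Fin N) (Fin M) ℂ)
    (C : Fin N → Matrix (Fin M) (Fin M) ℂ) (hC : ∀ n, (C n).PosSemidef)
    (σ2 : ℝ) (hσ2 : 0 < σ2)
    (Cy : Matrix (Fin N) (Fin N) ℝ)
    (hCy : Cy = σ2 • (1 : Matrix (Fin N) (Fin N) ℝ) +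
        (1 / 2 : ℝ) • (concatD Ψ * blockDiagC C * (concatD Ψ)ᴴ).map Complex.re)
    (Γ : Matrix (Fin N × Fin M) (Fin N × Fin M) ℂ)
    (hΓ : Γ = blockDiagC C - (1 / 4 : ℂ) •
        (blockDiagC C * (concatD Ψ)ᴴ * (Cy⁻¹.map Complex.ofReal) * concatD Ψ * blockDiagC C)) :
    Γ.PosSemidef := by
  set D := concatD Ψ
  set G := blockDiagC C
  have hG : G.PosSemidef := posSemidef_blockDiagC hC
  set X := D * G * Dᴴ
  have hX : X.PosSemidef := hG.mul_mul_conjTranspose_same D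
  set E := (1 / 2 : ℂ) • D
  set S := (σ2 : ℂ) • (1 : Matrix (Fin N) (Fin N) ℂ) + (1 / 4 : ℂ) • Xᵀ
  have hS : S.PosDef :=
    (PosDef.one.smul (by exact_mod_cast hσ2)).add_posSemidef
      (hX.transpose.smul (by norm_num [Complex.le_def]))
  have hCy' : Cy.map Complex.ofReal = E * G * Eᴴ + S := by
    have hmap : Cy.map Complex.ofReal =
        (σ2 : ℂ) • 1 + (1 / 2 : ℂ) • (X.map Complex.re).map Complex.ofReal := by
      ext i j
      by_cases h : i = j <;> simp [hCy, one_apply, h]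
    rw [hmap, hX.1.map_re_map_ofReal]
    simp only [E, S, X, conjTranspose_smul, Matrix.smul_mul, Matrix.mul_smul, smul_smul, smul_add]
    norm_num
    abel
  have hΓ' : Γ = G - G * Eᴴ * (E * G * Eᴴ + S)⁻¹ * E * G := by
    rw [hΓ, ← hCy', show Cy⁻¹.map Complex.ofReal = (Cy.map Complex.ofReal)⁻¹ from
      map_nonsing_inv Complex.ofRealHom Cy]
    simp only [E, conjTranspose_smul, Matrix.smul_mul, Matrix.mul_smul, smul_smul]
    norm_num
  exact hΓ' ▸ hG.sub_mul_conjTranspose_mul_inv_mul E hS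
end

section
/- Assume each Cₙ is Hermitian positive semidefinite and σ² > 0. For y ∈ ℝ^N, define for each n the vector w̃ₙ = (1/2) Cₙ Ψₙᴴ C_y⁻¹ y ∈ ℂ^M. Then the reconstruction ỹ₀ = Re(Σ_{n=1}^{N} Ψₙ w̃ₙ) satisfies ỹ₀ = y − σ² C_y⁻¹ y = (I − σ² C_y⁻¹) y; that is, the synthesis from the posterior-mean coefficients acts on y as the Wiener-type filter I − σ²C_y⁻¹. -/
/-!
The coefficients `w̃ₙ` synthesise to `ỹ₀ = ½ Re(S) C_y⁻¹ y` with `S = ∑ₙ Ψₙ Cₙ Ψₙᴴ = D Γ₀ Dᴴ`,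
and `½ Re(S) = C_y − σ² I`, so `ỹ₀ = (C_y − σ² I) C_y⁻¹ y = y − σ² C_y⁻¹ y`. The only analytic
input is that `C_y` is invertible: `Re(S)` is positive semidefinite because `S` is, so
`C_y = σ² I + ½ Re(S)` is positive definite.
-/

open Matrix
open scoped ComplexOrder

theorem concatD_mul_blockDiagC_mul_conjTranspose {N M : ℕ} (Ψ : Fin N → Matrix (Fin N) (Fin M) ℂ)
    (C : Fin N → Matrix (Fin M) (Fin M) ℂ) :
    concatD Ψ * blockDiagC C * (concatD Ψ)ᴴ = ∑ n, Ψ n * C n * (Ψ n)ᴴ := by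
  ext k l
  simp [mul_apply, concatD, blockDiagC, Matrix.sum_apply, Fintype.sum_prod_type, Finset.sum_mul]

namespace Matrix

variable {m n : Type*}

theorem ofReal_map_mulVec [Fintype n] (A : Matrix m n ℝ) (x : n → ℝ) :
    A.map Complex.ofReal *ᵥ (fun j => (x j : ℂ)) = fun i => ((A *ᵥ x) i : ℂ) :=
  funext fun i => (RingHom.map_mulVec Complex.ofRealHom A x i).symm

theorem re_mulVec_ofReal [Fintype n] (S : Matrix m n ℂ) (x : n → ℝ) :
    (fun i => (S *ᵥ fun j => (x j : ℂ)) i |>.re) = S.map Complex.re *ᵥ x := by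
  ext i
  simp [mulVec, dotProduct, Complex.re_sum]

theorem PosSemidef.map_re [Fintype n] {S : Matrix n n ℂ} (hS : S.PosSemidef) :
    (S.map Complex.re).PosSemidef := by
  refine .of_dotProduct_mulVec_nonneg ?_ fun x => ?_
  · ext i j
    simpa using congrArg Complex.re (congrFun (congrFun hS.isHermitian i) j)
  · have hquad_re : star x ⬝ᵥ (S.map Complex.re *ᵥ x) =
        (star (fun i => (x i : ℂ)) ⬝ᵥ (S *ᵥ fun i => (x i : ℂ))).re := by
      rw [← re_mulVec_ofReal]
      simp [dotProduct, Complex.re_sum]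
    rw [hquad_re]
    exact (Complex.le_def.mp (hS.dotProduct_mulVec_nonneg _)).1

theorem mulVec_inv_mulVec_of_eq_smul_one_add [Fintype n] [DecidableEq n] {K : Type*} [Field K]
    {A B : Matrix n n K} {s : K} (hA : A = s • 1 + B) (hdet : IsUnit A.det) (y : n → K) :
    B *ᵥ (A⁻¹ *ᵥ y) = y - s • (A⁻¹ *ᵥ y) := by
  have hB : B = A - s • 1 := by rw [hA]; abel
  rw [hB, sub_mulVec, mulVec_mulVec, mul_nonsing_inv _ hdet, one_mulVec, smul_mulVec,
    one_mulVec]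

end Matrix

theorem sum_mulVec_mul_conjTranspose_mulVec {ι m k n R : Type*} [Fintype ι] [Fintype m]
    [Fintype k] [Fintype n] [CommSemiring R] [StarRing R] (Ψ : ι → Matrix m k R)
    (C : ι → Matrix k k R) (A : Matrix m n R) (v : n → R) :
    ∑ i, Ψ i *ᵥ ((C i * (Ψ i)ᴴ * A) *ᵥ v) = (∑ i, Ψ i * C i * (Ψ i)ᴴ) *ᵥ (A *ᵥ v) := by
  simp only [mulVec_mulVec, Matrix.sum_mul, sum_mulVec, Matrix.mul_assoc]

/-- The synthesis `ỹ₀ = Re(∑ₙ Ψₙ w̃ₙ)` from the posterior-mean coefficients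
`w̃ₙ = (1/2) Cₙ Ψₙᴴ C_y⁻¹ y` acts on `y` as the Wiener-type filter `I − σ²C_y⁻¹`:
`ỹ₀ = y − σ² C_y⁻¹ y = (I − σ² C_y⁻¹) y`. -/
theorem stmt5 {N M : ℕ} (Ψ : Fin N → Matrix (Fin N) (Fin M) ℂ)
    (C : Fin N → Matrix (Fin M) (Fin M) ℂ) (hC : ∀ n, (C n).PosSemidef)
    (σ2 : ℝ) (hσ2 : 0 < σ2)
    (Cy : Matrix (Fin N) (Fin N) ℝ)
    (hCy : Cy = σ2 • (1 : Matrix (Fin N) (Fin N) ℝ) +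
        (1 / 2 : ℝ) • (concatD Ψ * blockDiagC C * (concatD Ψ)ᴴ).map Complex.re)
    (y : Fin N → ℝ)
    (w : Fin N → Fin M → ℂ)
    (hw : ∀ n, w n = (1 / 2 : ℂ) •
        (C n * (Ψ n)ᴴ * Cy⁻¹.map Complex.ofReal) *ᵥ (fun k => (y k : ℂ)))
    (y₀ : Fin N → ℝ)
    (hy₀ : y₀ = fun k => ((∑ n, Ψ n *ᵥ w n) k).re) :
    y₀ = y - σ2 • (Cy⁻¹ *ᵥ y) ∧
    y₀ = ((1 : Matrix (Fin N) (Fin N) ℝ) - σ2 • Cy⁻¹) *ᵥ y := by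
  rw [concatD_mul_blockDiagC_mul_conjTranspose] at hCy
  set S := ∑ n, Ψ n * C n * (Ψ n)ᴴ
  have hS : S.PosSemidef := posSemidef_sum _ fun n _ => (hC n).mul_mul_conjTranspose_same _
  have hCy_unit : IsUnit Cy.det := by
    rw [← isUnit_iff_isUnit_det, hCy]
    exact ((PosDef.one.smul hσ2).add_posSemidef (hS.map_re.smul (by norm_num))).isUnit
  have hsynth : y₀ = ((1 / 2 : ℝ) • S.map Complex.re) *ᵥ (Cy⁻¹ *ᵥ y) := by
    simp only [hy₀, hw, mulVec_smul, ← Finset.smul_sum, sum_mulVec_mul_conjTranspose_mulVec,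
      ofReal_map_mulVec]
    rw [← smul_mulVec, re_mulVec_ofReal]
    congr 1
    ext i j
    simp [S]
  have hfilter : y₀ = y - σ2 • (Cy⁻¹ *ᵥ y) := by
    rw [hsynth, mulVec_inv_mulVec_of_eq_smul_one_add hCy hCy_unit]
  refine ⟨hfilter, ?_⟩
  rw [hfilter, sub_mulVec, one_mulVec, smul_mulVec]
end

section
/- (Monotonicity of the likelihood under the EM update, finite latent variable.) Let 𝒲 be a nonempty finite set and Θ a set of parameters. Let p : Θ × 𝒲 → ℝ satisfy p(θ, w) > 0 for all θ ∈ Θ, w ∈ 𝒲. Define the marginal likelihood L(θ) = Σ_{w ∈ 𝒲} p(θ, w) and, for θ, θ' ∈ Θ, the EM functional Q(θ' | θ) = Σ_{w ∈ 𝒲} (p(θ, w)/L(θ)) · log p(θ', w). If θ, θ' ∈ Θ satisfy Q(θ' | θ) ≥ Q(θ | θ), then log L(θ') ≥ log L(θ). -/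
/-!
Write `q w = p(θ, w) / L(θ)` for the posterior under `θ`. Then
`Q(θ' | θ) - Q(θ | θ) = ∑ q w · log (p(θ', w) / p(θ, w))`, and by concavity of `log` (Jensen)
this is at most `log (∑ q w · p(θ', w) / p(θ, w)) = log (L(θ') / L(θ))`.
-/

open Finset Real

theorem Real.sum_mul_log_le_log_sum_mul {ι : Type*} {s : Finset ι} {q x : ι → ℝ}
    (hq : ∀ i ∈ s, 0 ≤ q i) (hq_sum : ∑ i ∈ s, q i = 1) (hx : ∀ i ∈ s, 0 < x i) :
    ∑ i ∈ s, q i * log (x i) ≤ log (∑ i ∈ s, q i * x i) := by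
  simpa only [smul_eq_mul] using strictConcaveOn_log_Ioi.concaveOn.le_map_sum hq hq_sum hx

theorem Real.sum_div_sum_mul_log_sub_le {ι : Type*} {s : Finset ι} (hs : s.Nonempty)
    {f g : ι → ℝ} (hf : ∀ i ∈ s, 0 < f i) (hg : ∀ i ∈ s, 0 < g i) :
    ∑ i ∈ s, f i / (∑ j ∈ s, f j) * (log (g i) - log (f i)) ≤
      log (∑ i ∈ s, g i) - log (∑ i ∈ s, f i) := by
  set F := ∑ j ∈ s, f j
  have hF : 0 < F := sum_pos hf hs
  have hG : 0 < ∑ i ∈ s, g i := sum_pos hg hs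
  have hweights : ∑ i ∈ s, f i / F = 1 := by rw [← sum_div, div_self hF.ne']
  calc ∑ i ∈ s, f i / F * (log (g i) - log (f i))
      = ∑ i ∈ s, f i / F * log (g i / f i) :=
        sum_congr rfl fun i hi => by rw [log_div (hg i hi).ne' (hf i hi).ne']
    _ ≤ log (∑ i ∈ s, f i / F * (g i / f i)) :=
        sum_mul_log_le_log_sum_mul (fun i hi => (div_pos (hf i hi) hF).le) hweights
          fun i hi => div_pos (hg i hi) (hf i hi)
    _ = log ((∑ i ∈ s, g i) / F) := by
        rw [sum_div]
        refine congrArg log (sum_congr rfl fun i hi => ?_)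
        field_simp [(hf i hi).ne']
    _ = log (∑ i ∈ s, g i) - log F := log_div hG.ne' hF.ne'

/-- Monotonicity of the likelihood under the EM update (finite latent variable): with
`L(θ) = ∑_w p(θ,w)` and `Q(θ'|θ) = ∑_w (p(θ,w)/L(θ)) log p(θ',w)`, if
`Q(θ'|θ) ≥ Q(θ|θ)` then `log L(θ') ≥ log L(θ)`. -/
theorem stmt16 {W : Type*} [Fintype W] [Nonempty W] {Θ : Type*}
    (p : Θ → W → ℝ) (hp : ∀ θ w, 0 < p θ w)
    (L : Θ → ℝ) (hL : ∀ θ, L θ = ∑ w, p θ w)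
    (Q : Θ → Θ → ℝ)
    (hQ : ∀ θ' θ, Q θ' θ = ∑ w, (p θ w / L θ) * Real.log (p θ' w))
    (θ θ' : Θ) (hEM : Q θ θ ≤ Q θ' θ) :
    Real.log (L θ) ≤ Real.log (L θ') := by
  have hgap := Real.sum_div_sum_mul_log_sub_le univ_nonempty
    (fun w _ => hp θ w) (fun w _ => hp θ' w)
  simp only [mul_sub, sum_sub_distrib, ← hL] at hgap
  rw [hQ, hQ] at hEM
  linarith
end
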